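/- Let ℓ ≥ 1 and let u be a finite mass solution of the coagulation-with-emission equations on [0,T]. Then the zeroth moment satisfies m₀(t) = m₀(0) − t for all t ∈ [0,T]. -/

import Mathlib

open Finset Filter Topology

noncomputable section

/-- Total reaction probability mass
`M(t) = ∑_{m,n ≥ 1, m+n ≥ ℓ+1} m n u_m(t) u_n(t)`. -/
def Mfun (ℓ : ℕ) (u : ℕ → ℝ → ℝ) (t : ℝ) : ℝ :=
  ∑' p : ℕ × ℕ,
    if 1 ≤ p.1 ∧ 1 ≤ p.2 ∧ ℓ + 1 ≤ p.1 + p.2 then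
      (p.1 : ℝ) * (p.2 : ℝ) * u p.1 t * u p.2 t
    else 0

/-- Right-hand side of the coagulation-with-emission equation for `u n`:
`(1/M)[∑_{i=1}^{n+ℓ−1} i(n+ℓ−i) u_i u_{n+ℓ−i} − 2 n u_n ∑_{i ≥ max(1, ℓ−n+1)} i u_i]`. -/
def coagRHS (ℓ : ℕ) (u : ℕ → ℝ → ℝ) (n : ℕ) (t : ℝ) : ℝ :=
  (1 / Mfun ℓ u t) *
    ((∑ i ∈ Finset.Icc 1 (n + ℓ - 1),
        (i : ℝ) * ((n + ℓ - i : ℕ) : ℝ) * u i t * u (n + ℓ - i) t)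
      - 2 * (n : ℝ) * u n t *
          (∑' i : ℕ, if max 1 (ℓ + 1 - n) ≤ i then (i : ℝ) * u i t else 0))

/-- `u` is a (C¹) solution of the coagulation-with-emission equations on `[0,T]`,
with `M > 0` on `[0,T]` and nonnegative initial data summing to `1`. -/
structure IsCoagSolution (ℓ : ℕ) (T : ℝ) (u : ℕ → ℝ → ℝ) : Prop where
  contDiff : ∀ n, 1 ≤ n → ContDiffOn ℝ 1 (u n) (Set.Icc 0 T)
  Msummable : ∀ t ∈ Set.Icc (0 : ℝ) T,
    Summable (fun p : ℕ × ℕ =>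
      if 1 ≤ p.1 ∧ 1 ≤ p.2 ∧ ℓ + 1 ≤ p.1 + p.2 then
        (p.1 : ℝ) * (p.2 : ℝ) * u p.1 t * u p.2 t
      else 0)
  Mpos : ∀ t ∈ Set.Icc (0 : ℝ) T, 0 < Mfun ℓ u t
  ode : ∀ n, 1 ≤ n → ∀ t ∈ Set.Icc (0 : ℝ) T,
    HasDerivWithinAt (u n) (coagRHS ℓ u n t) (Set.Icc 0 T) t
  init_nonneg : ∀ n, 1 ≤ n → 0 ≤ u n 0
  init_sum : HasSum (fun i : ℕ => if 1 ≤ i then u i 0 else 0) 1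

/-- A finite mass solution: a nonnegative solution whose first-moment series
`m₁(t) = ∑_{i ≥ 1} i u_i(t)` converges uniformly on `[0,T]`. -/
structure IsFiniteMassSolution (ℓ : ℕ) (T : ℝ) (u : ℕ → ℝ → ℝ)
    extends IsCoagSolution ℓ T u : Prop where
  nonneg : ∀ n, 1 ≤ n → ∀ t ∈ Set.Icc (0 : ℝ) T, 0 ≤ u n t
  m1_unif : TendstoUniformlyOn
    (fun N t => ∑ i ∈ Finset.range N, (i : ℝ) * u i t)
    (fun t => ∑' i : ℕ, (i : ℝ) * u i t) atTop (Set.Icc 0 T)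

/-- The `k`-th moment `m_k(t) = ∑_{i ≥ 1} i^k u_i(t)`. -/
def moment (u : ℕ → ℝ → ℝ) (k : ℕ) (t : ℝ) : ℝ :=
  ∑' i : ℕ, if 1 ≤ i then (i : ℝ) ^ k * u i t else 0

/-!
Write `c_i = i u_i`. Summing the equations over `n ≤ N` gives `∑_{n ≤ N} u̇_n = (G_N - 2 L_N) / M`,
where the gain `G_N` is the sum of `c_i c_j` over the reacting pairs with `i + j ≤ N + ℓ` and the
loss `L_N` the sum over the reacting pairs with `i ≤ N`, while `M` is the sum over all reacting
pairs. Both truncations contain every pair with `i, j < K` for some `K ≳ N / 2`, so they differ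
from `M` by at most `m₁² - (∑_{i<K} c_i)²`, which tends to zero uniformly on `[0,T]` because `m₁`
converges uniformly. Being a uniform limit of continuous functions, `M` is continuous, hence
bounded below by a positive constant on `[0,T]`, and so `∑_{n ≤ N} u̇_n → -1` uniformly. The mean
value theorem turns this into `∑_{n ≤ N} (u_n(t) - u_n(0)) → -t`.
-/

def pairSum (c : ℕ → ℝ) (S : Set (ℕ × ℕ)) : ℝ :=
  ∑' p : ℕ × ℕ, S.indicator (fun p => c p.1 * c p.2) p

def reactingPairs (ℓ : ℕ) : Set (ℕ × ℕ) :=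
  {p | 1 ≤ p.1 ∧ 1 ≤ p.2 ∧ ℓ + 1 ≤ p.1 + p.2}

def gainSum (ℓ N : ℕ) (c : ℕ → ℝ) : ℝ :=
  ∑ n ∈ Icc 1 N, ∑ i ∈ Icc 1 (n + ℓ - 1), c i * c (n + ℓ - i)

def lossSum (ℓ N : ℕ) (c : ℕ → ℝ) : ℝ :=
  ∑ n ∈ Icc 1 N, c n * ∑' i, if max 1 (ℓ + 1 - n) ≤ i then c i else 0

section PairSum

variable {c : ℕ → ℝ}

theorem pairSum_mono (hc0 : 0 ≤ c) (hc : Summable c) {S S' : Set (ℕ × ℕ)} (h : S' ⊆ S) :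
    pairSum c S' ≤ pairSum c S :=
  have hf := hc.mul_of_nonneg hc hc0 hc0
  (hf.indicator S').tsum_le_tsum
    (Set.indicator_le_indicator_of_subset h fun _ => mul_nonneg (hc0 _) (hc0 _)) (hf.indicator S)

theorem pairSum_coe_finset (c : ℕ → ℝ) (Q : Finset (ℕ × ℕ)) :
    pairSum c Q = ∑ p ∈ Q, c p.1 * c p.2 := by
  rw [pairSum, ← _root_.tsum_subtype]
  exact tsum_subtype' Q fun p => c p.1 * c p.2

theorem pairSum_sub_pairSum_inter_le (hc0 : 0 ≤ c) (hc : Summable c) (S : Set (ℕ × ℕ))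
    {R : Set (ℕ × ℕ)} {K : ℕ} (hR : ∀ p : ℕ × ℕ, p.1 < K → p.2 < K → p ∈ R) :
    pairSum c S - pairSum c (S ∩ R) ≤ (∑' i, c i) ^ 2 - (∑ i ∈ range K, c i) ^ 2 := by
  set f : ℕ × ℕ → ℝ := fun p => c p.1 * c p.2
  have hf0 : 0 ≤ f := fun p => mul_nonneg (hc0 _) (hc0 _)
  have hf : Summable f := hc.mul_of_nonneg hc hc0 hc0
  set Q := range K ×ˢ range K
  have hQ : ∑' p, ((Q : Set (ℕ × ℕ))ᶜ).indicator f p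
      = (∑' i, c i) ^ 2 - (∑ i ∈ range K, c i) ^ 2 := by
    have hsplit := hf.sum_add_tsum_compl (s := Q)
    have hfull : ∑' p, f p = (∑' i, c i) ^ 2 := by rw [sq, hc.tsum_mul_tsum hc hf]
    have hsquare : ∑ p ∈ Q, f p = (∑ i ∈ range K, c i) ^ 2 := by
      rw [sq, sum_mul_sum]
      exact sum_product _ _ _
    rw [_root_.tsum_subtype] at hsplit
    linarith
  have hle : ∀ p, S.indicator f p - (S ∩ R).indicator f p ≤ ((Q : Set (ℕ × ℕ))ᶜ).indicator f p := by
    intro p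
    by_cases hp : p ∈ R
    · rw [Set.inter_comm, ← Set.indicator_indicator, Set.indicator_of_mem hp, sub_self]
      exact Set.indicator_nonneg (fun q _ => hf0 q) p
    · have hpQ : p ∈ (Q : Set (ℕ × ℕ))ᶜ := fun h => hp <| by
        simp only [Q, mem_coe, mem_product, mem_range] at h
        exact hR p h.1 h.2
      rw [Set.indicator_of_notMem (s := S ∩ R) (fun h => hp h.2), sub_zero,
        Set.indicator_of_mem hpQ]
      exact Set.indicator_le_self' (fun q _ => hf0 q) p
  calc pairSum c S - pairSum c (S ∩ R)
      = ∑' p, (S.indicator f p - (S ∩ R).indicator f p) :=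
        ((hf.indicator S).tsum_sub (hf.indicator _)).symm
    _ ≤ ∑' p, ((Q : Set (ℕ × ℕ))ᶜ).indicator f p :=
        ((hf.indicator S).sub (hf.indicator _)).tsum_le_tsum hle (hf.indicator _)
    _ = _ := hQ

end PairSum

theorem gainSum_eq_pairSum (ℓ N : ℕ) (c : ℕ → ℝ) :
    gainSum ℓ N c = pairSum c (reactingPairs ℓ ∩ {p | p.1 + p.2 ≤ N + ℓ}) := by
  set Q := (range (N + ℓ + 1) ×ˢ range (N + ℓ + 1)).filter
    fun p => 1 ≤ p.1 ∧ 1 ≤ p.2 ∧ ℓ + 1 ≤ p.1 + p.2 ∧ p.1 + p.2 ≤ N + ℓ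
  have hQ : (Q : Set (ℕ × ℕ)) = reactingPairs ℓ ∩ {p | p.1 + p.2 ≤ N + ℓ} := by
    ext p
    simp only [Q, coe_filter, mem_product, mem_range, reactingPairs, Set.mem_inter_iff,
      Set.mem_ofPred_eq]
    omega
  rw [← hQ, pairSum_coe_finset, gainSum, sum_sigma']
  refine sum_nbij' (fun q => (q.2, q.1 + ℓ - q.2)) (fun p => ⟨p.1 + p.2 - ℓ, p.1⟩)
    ?_ ?_ ?_ ?_ ?_
  · rintro ⟨n, i⟩ hq
    simp only [mem_sigma, mem_Icc] at hq
    simp only [Q, mem_filter, mem_product, mem_range]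
    omega
  · intro p hp
    simp only [Q, mem_filter, mem_product, mem_range] at hp
    simp only [mem_sigma, mem_Icc]
    omega
  · rintro ⟨n, i⟩ hq
    simp only [mem_sigma, mem_Icc] at hq
    simp only [Sigma.mk.injEq, heq_eq_eq, and_true]
    omega
  · intro p hp
    simp only [Q, mem_filter, mem_product, mem_range] at hp
    exact Prod.ext rfl (by dsimp only; omega)
  · intro _ _
    rfl

theorem lossSum_eq_pairSum (ℓ N : ℕ) {c : ℕ → ℝ} (hc0 : 0 ≤ c) (hc : Summable c) :
    lossSum ℓ N c = pairSum c (reactingPairs ℓ ∩ {p | p.1 ≤ N}) := by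
  have hF := (hc.mul_of_nonneg hc hc0 hc0).indicator (reactingPairs ℓ ∩ {p | p.1 ≤ N})
  rw [pairSum, hF.tsum_prod' hF.prod_factor, tsum_eq_sum (s := Icc 1 N), lossSum]
  · refine sum_congr rfl fun n hn => ?_
    rw [mem_Icc] at hn
    rw [← tsum_mul_left]
    refine tsum_congr fun i => ?_
    simp only [Set.indicator_apply, reactingPairs, Set.mem_inter_iff, Set.mem_ofPred_eq]
    split_ifs <;> first | rfl | exact mul_zero _ | (exfalso; omega)
  · intro n hn
    rw [mem_Icc] at hn
    refine (tsum_congr fun i => Set.indicator_of_notMem ?_ _).trans tsum_zero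
    rintro ⟨⟨h1, -, -⟩, h2⟩
    exact hn ⟨h1, h2⟩

theorem Mfun_eq_pairSum (ℓ : ℕ) (u : ℕ → ℝ → ℝ) (t : ℝ) :
    Mfun ℓ u t = pairSum (fun i => (i : ℝ) * u i t) (reactingPairs ℓ) := by
  refine tsum_congr fun p => ?_
  simp only [Set.indicator_apply, reactingPairs, Set.mem_ofPred_eq]
  split_ifs <;> ring

theorem sum_coagRHS_eq (ℓ N : ℕ) (u : ℕ → ℝ → ℝ) (t : ℝ) :
    ∑ n ∈ Icc 1 N, coagRHS ℓ u n t
      = (gainSum ℓ N (fun i => (i : ℝ) * u i t)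
          - 2 * lossSum ℓ N (fun i => (i : ℝ) * u i t)) / Mfun ℓ u t := by
  rw [div_eq_inv_mul, gainSum, lossSum, mul_sum, ← sum_sub_distrib, mul_sum]
  refine sum_congr rfl fun n _ => ?_
  rw [coagRHS, one_div]
  congr 2
  · exact sum_congr rfl fun i _ => by ring
  · ring

section UniformConvergence

variable {α ι : Type*} {l : Filter ι} {s : Set α}

theorem tendstoUniformlyOn_pairSum_inter {c : α → ℕ → ℝ} {C : ℝ} (hc0 : ∀ x ∈ s, 0 ≤ c x)
    (hC : ∀ x ∈ s, ∑' i, c x i ≤ C)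
    (hc : TendstoUniformlyOn (fun K x => ∑ i ∈ range K, c x i) (fun x => ∑' i, c x i) atTop s)
    (S : Set (ℕ × ℕ)) {R : ι → Set (ℕ × ℕ)} {K : ι → ℕ} (hK : Tendsto K l atTop)
    (hR : ∀ n, ∀ p : ℕ × ℕ, p.1 < K n → p.2 < K n → p ∈ R n) :
    TendstoUniformlyOn (fun n x => pairSum (c x) (S ∩ R n)) (fun x => pairSum (c x) S) l s := by
  have hsum : ∀ x ∈ s, Summable (c x) := fun x hx =>
    ((hasSum_iff_tendsto_nat_of_nonneg (hc0 x hx) _).mpr (hc.tendsto_at hx)).summable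
  rw [Metric.tendstoUniformlyOn_iff]
  intro ε hε
  set D := |C| + 1
  have hD : 0 < D := by positivity
  filter_upwards [hK.eventually (Metric.tendstoUniformlyOn_iff.mp hc (ε / (2 * D)) (by positivity))]
    with n hn x hx
  have hpartial_le := (hsum x hx).sum_le_tsum (range (K n)) fun i _ => hc0 x hx i
  have hpartial_nonneg : 0 ≤ ∑ i ∈ range (K n), c x i := sum_nonneg fun i _ => hc0 x hx i
  have htail := hn x hx
  rw [Real.dist_eq, abs_of_nonneg (sub_nonneg.2 hpartial_le)] at htail
  have hdiff := pairSum_sub_pairSum_inter_le (hc0 x hx) (hsum x hx) S (hR n)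
  have hmono := pairSum_mono (hc0 x hx) (hsum x hx) (Set.inter_subset_left (s := S) (t := R n))
  rw [Real.dist_eq, abs_of_nonneg (sub_nonneg.2 hmono)]
  have hCD : ∑' i, c x i ≤ D := (hC x hx).trans ((le_abs_self C).trans (lt_add_one _).le)
  calc pairSum (c x) S - pairSum (c x) (S ∩ R n)
      ≤ (∑' i, c x i - ∑ i ∈ range (K n), c x i) * (∑' i, c x i + ∑ i ∈ range (K n), c x i) := by
        nlinarith
    _ ≤ (∑' i, c x i - ∑ i ∈ range (K n), c x i) * (2 * D) :=
        mul_le_mul_of_nonneg_left (by linarith) (by linarith)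
    _ < ε / (2 * D) * (2 * D) := mul_lt_mul_of_pos_right htail (by positivity)
    _ = ε := div_mul_cancel₀ _ (by positivity)

theorem tendstoUniformlyOn_sub_two_mul_div {A B : ι → α → ℝ} {M : α → ℝ} {δ : ℝ}
    (hA : TendstoUniformlyOn A M l s) (hB : TendstoUniformlyOn B M l s) (hδ : 0 < δ)
    (hM : ∀ x ∈ s, δ ≤ M x) :
    TendstoUniformlyOn (fun n x => (A n x - 2 * B n x) / M x) (fun _ => -1) l s := by
  rw [Metric.tendstoUniformlyOn_iff] at hA hB ⊢
  intro ε hε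
  filter_upwards [hA (δ * ε / 3) (by positivity), hB (δ * ε / 3) (by positivity)]
    with n hAn hBn x hx
  have hMx : 0 < M x := hδ.trans_le (hM x hx)
  have hA' := abs_lt.mp (hAn x hx)
  have hB' := abs_lt.mp (hBn x hx)
  have hεM := mul_le_mul_of_nonneg_left (hM x hx) hε.le
  rw [Real.dist_eq, show -1 - (A n x - 2 * B n x) / M x
      = ((M x - A n x) - 2 * (M x - B n x)) / M x by field_simp; ring,
    abs_div, abs_of_pos hMx, div_lt_iff₀ hMx, abs_lt]
  constructor <;> linarith

end UniformConvergence

theorem tendsto_sub_of_tendstoUniformlyOn_deriv {ι : Type*} {l : Filter ι} {f f' : ι → ℝ → ℝ}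
    {a b c t : ℝ}
    (hf : ∀ n, ∀ x ∈ Set.Icc a b, HasDerivWithinAt (f n) (f' n x) (Set.Icc a b) x)
    (hf' : TendstoUniformlyOn f' (fun _ => c) l (Set.Icc a b)) (ht : t ∈ Set.Icc a b) :
    Tendsto (fun n => f n t - f n a) l (𝓝 (c * (t - a))) := by
  rw [Metric.tendsto_nhds]
  intro ε hε
  have hta : 0 ≤ t - a := sub_nonneg.2 ht.1
  have hη : 0 < ε / (t - a + 1) := by positivity
  filter_upwards [Metric.tendstoUniformlyOn_iff.mp hf' _ hη] with n hn
  have hmvt := norm_image_sub_le_of_norm_deriv_le_segment'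
    (f := fun x => f n x - c * x) (f' := fun x => f' n x - c)
    (fun x hx => by simpa using (hf n x hx).fun_sub ((hasDerivWithinAt_id x _).const_mul c))
    (fun x hx => by
      rw [Real.norm_eq_abs, abs_sub_comm]
      exact (hn x (Set.Ico_subset_Icc_self hx)).le) t ht
  rw [Real.dist_eq]
  calc |f n t - f n a - c * (t - a)| = ‖(f n t - c * t) - (f n a - c * a)‖ := by
        rw [Real.norm_eq_abs]; ring_nf
    _ ≤ ε / (t - a + 1) * (t - a) := hmvt
    _ < ε := by
        rw [div_mul_eq_mul_div, div_lt_iff₀ (by positivity)]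
        nlinarith

namespace IsCoagSolution

variable {ℓ : ℕ} {T : ℝ} {u : ℕ → ℝ → ℝ}

theorem continuousOn_natCast_mul (hu : IsCoagSolution ℓ T u) (i : ℕ) :
    ContinuousOn (fun t => (i : ℝ) * u i t) (Set.Icc 0 T) := by
  rcases Nat.eq_zero_or_pos i with rfl | hi
  · simpa using continuousOn_const
  · exact continuousOn_const.mul (hu.contDiff i hi).continuousOn

theorem continuousOn_gainSum (hu : IsCoagSolution ℓ T u) (N : ℕ) :
    ContinuousOn (fun t => gainSum ℓ N fun i => (i : ℝ) * u i t) (Set.Icc 0 T) :=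
  continuousOn_finsetSum _ fun _ _ => continuousOn_finsetSum _ fun i _ =>
    (hu.continuousOn_natCast_mul i).mul (hu.continuousOn_natCast_mul _)

end IsCoagSolution

namespace IsFiniteMassSolution

variable {ℓ : ℕ} {T : ℝ} {u : ℕ → ℝ → ℝ}

theorem natCast_mul_nonneg (hu : IsFiniteMassSolution ℓ T u) {t : ℝ}
    (ht : t ∈ Set.Icc 0 T) : 0 ≤ fun i : ℕ => (i : ℝ) * u i t := by
  intro i
  rcases Nat.eq_zero_or_pos i with rfl | hi
  · simp
  · exact mul_nonneg i.cast_nonneg (hu.nonneg i hi t ht)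

theorem summable_natCast_mul (hu : IsFiniteMassSolution ℓ T u) {t : ℝ}
    (ht : t ∈ Set.Icc 0 T) : Summable fun i : ℕ => (i : ℝ) * u i t :=
  ((hasSum_iff_tendsto_nat_of_nonneg (hu.natCast_mul_nonneg ht) _).mpr
    (hu.m1_unif.tendsto_at ht)).summable

theorem exists_firstMoment_le (hu : IsFiniteMassSolution ℓ T u) :
    ∃ C, ∀ t ∈ Set.Icc 0 T, ∑' i : ℕ, (i : ℝ) * u i t ≤ C := by
  have hcont := hu.m1_unif.continuousOn
    (Frequently.of_forall fun N => continuousOn_finsetSum (range N) fun i _ =>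
      hu.continuousOn_natCast_mul i)
  obtain ⟨C, hC⟩ := isCompact_Icc.exists_bound_of_continuousOn hcont
  exact ⟨C, fun t ht => (le_abs_self _).trans (hC t ht)⟩

theorem tendstoUniformlyOn_gainSum (hu : IsFiniteMassSolution ℓ T u) :
    TendstoUniformlyOn (fun N t => gainSum ℓ N fun i => (i : ℝ) * u i t) (Mfun ℓ u) atTop
      (Set.Icc 0 T) := by
  obtain ⟨C, hC⟩ := hu.exists_firstMoment_le
  simp_rw [gainSum_eq_pairSum, funext (Mfun_eq_pairSum ℓ u)]
  refine tendstoUniformlyOn_pairSum_inter (c := fun t i => (i : ℝ) * u i t)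
    (fun t ht => hu.natCast_mul_nonneg ht) hC hu.m1_unif _ (K := fun N => N / 2 + 1)
    (tendsto_atTop_atTop.2 fun k => ⟨2 * k, fun N hN => by omega⟩) fun N p h₁ h₂ => ?_
  simp only [Set.mem_ofPred_eq]
  omega

theorem tendstoUniformlyOn_lossSum (hu : IsFiniteMassSolution ℓ T u) :
    TendstoUniformlyOn (fun N t => lossSum ℓ N fun i => (i : ℝ) * u i t) (Mfun ℓ u) atTop
      (Set.Icc 0 T) := by
  obtain ⟨C, hC⟩ := hu.exists_firstMoment_le
  have hpair := tendstoUniformlyOn_pairSum_inter (c := fun t i => (i : ℝ) * u i t)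
    (fun t ht => hu.natCast_mul_nonneg ht) hC hu.m1_unif (reactingPairs ℓ)
    (R := fun N => {p | p.1 ≤ N}) (K := fun N => N + 1) (tendsto_add_atTop_nat 1)
    fun N p h₁ _ => Nat.lt_succ_iff.mp h₁
  refine (hpair.congr (Eventually.of_forall fun N t ht => ?_)).congr_right
    fun t _ => (Mfun_eq_pairSum ℓ u t).symm
  exact (lossSum_eq_pairSum ℓ N (hu.natCast_mul_nonneg ht) (hu.summable_natCast_mul ht)).symm

theorem continuousOn_Mfun (hu : IsFiniteMassSolution ℓ T u) :
    ContinuousOn (Mfun ℓ u) (Set.Icc 0 T) :=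
  hu.tendstoUniformlyOn_gainSum.continuousOn (Frequently.of_forall hu.continuousOn_gainSum)

theorem tendstoUniformlyOn_sum_coagRHS (hu : IsFiniteMassSolution ℓ T u) :
    TendstoUniformlyOn (fun N t => ∑ n ∈ Icc 1 N, coagRHS ℓ u n t) (fun _ => -1) atTop
      (Set.Icc 0 T) := by
  obtain ⟨δ, hδ, hM⟩ := isCompact_Icc.exists_forall_le' hu.continuousOn_Mfun hu.Mpos
  simp_rw [sum_coagRHS_eq]
  exact tendstoUniformlyOn_sub_two_mul_div hu.tendstoUniformlyOn_gainSum
    hu.tendstoUniformlyOn_lossSum hδ hM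

theorem tendsto_sum_moment_zero (hu : IsFiniteMassSolution ℓ T u) {t : ℝ}
    (ht : t ∈ Set.Icc 0 T) :
    Tendsto (fun N => ∑ n ∈ Icc 1 N, u n t) atTop (𝓝 (moment u 0 t)) := by
  have hsum : Summable fun i : ℕ => if 1 ≤ i then (i : ℝ) ^ 0 * u i t else 0 := by
    refine (hu.summable_natCast_mul ht).of_nonneg_of_le (fun i => ?_) fun i => ?_
    · split_ifs with hi
      · simpa using hu.nonneg i hi t ht
      · rfl
    · split_ifs with hi
      · simpa using le_mul_of_one_le_left (hu.nonneg i hi t ht) (by exact_mod_cast hi)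
      · exact hu.natCast_mul_nonneg ht i
  refine (hsum.hasSum.tendsto_sum_nat.comp (tendsto_add_atTop_nat 1)).congr fun N => ?_
  have hfilter : (range (N + 1)).filter (1 ≤ ·) = Icc 1 N := by
    ext i
    simp only [mem_filter, mem_range, mem_Icc]
    omega
  simp only [Function.comp_apply, ← sum_filter, hfilter, pow_zero, one_mul]

end IsFiniteMassSolution

theorem zeroth_moment_loss (ℓ : ℕ) (T : ℝ)
    (u : ℕ → ℝ → ℝ) (hu : IsFiniteMassSolution ℓ T u) :
    ∀ t ∈ Set.Icc (0 : ℝ) T, moment u 0 t = moment u 0 0 - t := by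
  intro t ht
  have hmass : Tendsto (fun N => ∑ n ∈ Icc 1 N, u n t - ∑ n ∈ Icc 1 N, u n 0) atTop
      (𝓝 (-1 * (t - 0))) :=
    tendsto_sub_of_tendstoUniformlyOn_deriv
      (fun N s hs => HasDerivWithinAt.fun_sum fun n hn => hu.ode n (mem_Icc.1 hn).1 s hs)
      hu.tendstoUniformlyOn_sum_coagRHS ht
  have hmoment := (hu.tendsto_sum_moment_zero ht).sub
    (hu.tendsto_sum_moment_zero ⟨le_rfl, ht.1.trans ht.2⟩)
  linarith [tendsto_nhds_unique hmoment hmass]
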